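/- For every integer r ≥ 1, consider the fair-division-with-social-impact instance with two agents a_1, a_2 and r+1 items g_1, …, g_{r+1}, where v_{a_1}(g_k) = v_{a_2}(g_k) = 10, s_{a_1}(g_k) = 0, and s_{a_2}(g_k) = 1 for every k. Then no SIM allocation is envy-free up to r items for agent a_1: in every SIM allocation A, for every set X ⊆ M with |X| ≤ r we have v_{a_1}(A_{a_1}) < v_{a_1}(A_{a_2} \ X). -/

import Mathlib

open Finset

variable {N M : Type*}

/-- The bundle of agent `i` under allocation `A` (items mapped to `i`). -/
def bundle [Fintype M] [DecidableEq N] (A : M → N) (i : N) : Finset M :=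
  Finset.univ.filter fun g => A g = i

/-- The (additive) value of a bundle `S` under the item-values `f`. -/
def val (f : M → ℕ) (S : Finset M) : ℕ := ∑ g ∈ S, f g

/-- An allocation is social impact maximizing (SIM). -/
def SIM [Fintype N] [Fintype M] [DecidableEq N] (s : N → M → ℕ) (A : M → N) : Prop :=
  ∀ A' : M → N, ∑ i : N, val (s i) (bundle A i) ≥ ∑ i : N, val (s i) (bundle A' i)

/-! The socially aware agent `a₂` has strictly larger impact on every item, so the
only SIM allocation gives her everything; then `a₁` has value `0` while `a₂` keeps at least one
item of value `10` after any `r` of her `r + 1` items are removed. -/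

section

variable [Fintype M] [DecidableEq N]

theorem sum_val_bundle [Fintype N] (s : N → M → ℕ) (A : M → N) :
    ∑ i, val (s i) (bundle A i) = ∑ g, s (A g) g := by
  rw [← Finset.sum_fiberwise univ A fun g => s (A g) g]
  refine Finset.sum_congr rfl fun i _ => Finset.sum_congr rfl fun g hg => ?_
  rw [(mem_filter.1 hg).2]

theorem bundle_eq_univ {A : M → N} {j : N} (h : ∀ g, A g = j) : bundle A j = univ := by
  ext g; simp [bundle, h g]

theorem bundle_eq_empty {A : M → N} {i j : N} (h : ∀ g, A g = j) (hij : i ≠ j) :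
    bundle A i = ∅ := by
  ext g; simp [bundle, h g, hij.symm]

/-- Comparing with the allocation that gives every item to `j`. -/
theorem SIM.eq_of_forall_lt [Fintype N] {s : N → M → ℕ} {A : M → N} (hA : SIM s A) {j : N}
    (hj : ∀ g, ∀ i ≠ j, s i g < s j g) (g : M) : A g = j := by
  by_contra hg
  have hle : ∀ g' ∈ univ, s (A g') g' ≤ s j g' := fun g' _ => by
    by_cases h : A g' = j
    · rw [h]
    · exact (hj g' _ h).le
  have hlt : ∑ g', s (A g') g' < ∑ g', s j g' :=
    Finset.sum_lt_sum hle ⟨g, mem_univ g, hj g _ hg⟩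
  have hsim := hA fun _ => j
  rw [ge_iff_le, sum_val_bundle, sum_val_bundle] at hsim
  exact hsim.not_gt hlt

end

theorem val_pos {f : M → ℕ} {S : Finset M} (hf : ∀ g, 0 < f g) (hS : S.Nonempty) :
    0 < val f S :=
  Finset.sum_pos (fun g _ => hf g) hS

theorem sdiff_nonempty_of_card_lt [Fintype M] [DecidableEq M] {X : Finset M}
    (hX : X.card < Fintype.card M) : (univ \ X).Nonempty := by
  rw [Finset.sdiff_nonempty]
  intro h
  exact (card_le_card h).not_gt (by simpa using hX)

theorem no_sim_efr_for_unaware_general (r : ℕ)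
    (A : Fin (r + 1) → Fin 2)
    (hA : SIM (fun i : Fin 2 => fun _ : Fin (r + 1) => if i = 1 then 1 else 0) A)
    (X : Finset (Fin (r + 1))) (hX : X.card ≤ r) :
    val (fun _ : Fin (r + 1) => (10 : ℕ)) (bundle A 0) <
    val (fun _ : Fin (r + 1) => (10 : ℕ)) ((bundle A 1) \ X) := by
  have hall : ∀ g, A g = 1 := hA.eq_of_forall_lt fun g i hi => by simp [hi]
  rw [bundle_eq_empty hall (by decide), bundle_eq_univ hall]
  refine val_pos (fun _ => by norm_num) (sdiff_nonempty_of_card_lt ?_)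
  simp only [Fintype.card_fin]
  omega

/-- Instance with two agents (`0 = a₁` socially unaware, `1 = a₂`) and `r + 1`
identical items with `v(g) = 10` for both agents, `s_{a₁}(g) = 0`, `s_{a₂}(g) = 1`.
In every SIM allocation, agent `a₁` envies `a₂` even up to the removal of any `r`
items from `a₂`'s bundle. -/
theorem no_sim_efr_for_unaware (r : ℕ) (hr : 1 ≤ r)
    (A : Fin (r + 1) → Fin 2)
    (hA : SIM (fun i : Fin 2 => fun _ : Fin (r + 1) => if i = 1 then 1 else 0) A)
    (X : Finset (Fin (r + 1))) (hX : X.card ≤ r) :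
    val (fun _ : Fin (r + 1) => (10 : ℕ)) (bundle A 0) <
    val (fun _ : Fin (r + 1) => (10 : ℕ)) ((bundle A 1) \ X) :=
  no_sim_efr_for_unaware_general r A hA X hX
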